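/- arXiv:2205.04330 — 2 statements merged into one kernel-verified Lean document; each statement's English description precedes it below -/
import Mathlib

section
/- Let m ≥ 1, let x_1,…,x_m be real numbers, let s>0 and μ ∈ sℤ with μ < min_i x_i. If Y_1,…,Y_m are independent with Y_i ~ Poisson((x_i−μ)/s), then the sum ∑_i (sY_i + μ) has the same distribution as sZ + mμ, where Z ~ Poisson((∑_i x_i − mμ)/s). In other words, the sum of independent Poisson quantisations Q_{s,μ}(x_i) is distributed as the single Poisson quantisation Q_{s,mμ}(∑_i x_i). -/
open ProbabilityTheory MeasureTheory Real Finset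
open scoped NNReal ENNReal


lemma poissonPMFReal_conv (a b : ℝ≥0) (n : ℕ) :
    ∑ k ∈ Finset.range (n+1), poissonPMFReal a k * poissonPMFReal b (n-k)
      = poissonPMFReal (a+b) n := by
  unfold poissonPMFReal
  push_cast
  rw [neg_add, Real.exp_add, add_pow, Finset.mul_sum, Finset.sum_div]
  refine Finset.sum_congr rfl fun k hk => ?_
  have hkn : k ≤ n := Nat.lt_succ_iff.mp (Finset.mem_range.mp hk)
  have hfac : ((n.choose k : ℝ)) * (k.factorial : ℝ) * ((n-k).factorial : ℝ)
      = (n.factorial : ℝ) := by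
    exact_mod_cast congrArg (Nat.cast (R := ℝ)) (Nat.choose_mul_factorial_mul_factorial hkn)
  have h1 : (k.factorial : ℝ) ≠ 0 := Nat.cast_ne_zero.mpr (Nat.factorial_ne_zero k)
  have h2 : ((n-k).factorial : ℝ) ≠ 0 := Nat.cast_ne_zero.mpr (Nat.factorial_ne_zero _)
  have h3 : (n.factorial : ℝ) ≠ 0 := Nat.cast_ne_zero.mpr (Nat.factorial_ne_zero n)
  field_simp
  linear_combination (-((a:ℝ)^k * (b:ℝ)^(n-k))) * hfac

lemma poissonPMF_singleton (r : ℝ≥0) (n : ℕ) :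
    (poissonPMF r).toMeasure {n} = ENNReal.ofReal (poissonPMFReal r n) := by
  rw [PMF.toMeasure_apply_singleton _ _ (measurableSet_singleton n)]; rfl

lemma poisson_conv (a b : ℝ≥0) :
    Measure.map (fun p : ℕ × ℕ => p.1 + p.2)
      ((poissonPMF a).toMeasure.prod (poissonPMF b).toMeasure)
      = (poissonPMF (a+b)).toMeasure := by
  refine Measure.ext_iff_singleton.mpr fun n => ?_
  rw [poissonPMF_singleton,
    Measure.map_apply (by fun_prop) (measurableSet_singleton n)]
  have hset : (fun p : ℕ × ℕ => p.1 + p.2) ⁻¹' {n}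
      = ⋃ k ∈ Finset.range (n+1), ({k} ×ˢ {n-k} : Set (ℕ × ℕ)) := by
    ext ⟨p, q⟩
    simp only [Set.mem_preimage, Set.mem_singleton_iff, Set.mem_iUnion, Finset.mem_range,
      Set.mem_prod, Nat.lt_succ_iff]
    constructor
    · rintro rfl
      exact ⟨p, Nat.le_add_right _ _, rfl, by omega⟩
    · rintro ⟨k, hk, rfl, rfl⟩
      omega
  rw [hset, measure_biUnion_finset ?_ (fun k _ => (measurableSet_singleton k).prod
      (measurableSet_singleton (n-k)))]
  · have : ∀ k ∈ Finset.range (n+1),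
        ((poissonPMF a).toMeasure.prod (poissonPMF b).toMeasure) ({k} ×ˢ {n-k})
          = ENNReal.ofReal (poissonPMFReal a k * poissonPMFReal b (n-k)) := by
      intro k _
      rw [Measure.prod_prod, poissonPMF_singleton, poissonPMF_singleton,
        ← ENNReal.ofReal_mul poissonPMFReal_nonneg]
    rw [Finset.sum_congr rfl this,
      ← ENNReal.ofReal_sum_of_nonneg (fun _ _ => mul_nonneg poissonPMFReal_nonneg
        poissonPMFReal_nonneg), poissonPMFReal_conv]
  · intro i hi j hj hij
    simp only [Function.onFun, Set.disjoint_left]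
    rintro ⟨p, q⟩ ⟨hp, _⟩ ⟨hp', _⟩
    exact hij (hp ▸ hp')

lemma poisson_zero : (poissonPMF (0:ℝ≥0)).toMeasure = Measure.dirac 0 := by
  refine Measure.ext_iff_singleton.mpr fun n => ?_
  rw [poissonPMF_singleton, Measure.dirac_apply' _ (measurableSet_singleton n)]
  unfold poissonPMFReal
  cases n with
  | zero => simp
  | succ n => simp

lemma map_finset_sum_poisson {Ω : Type*} [MeasurableSpace Ω] (P : Measure Ω)
    [IsProbabilityMeasure P] {m : ℕ} (Y : Fin m → Ω → ℕ) (hmeas : ∀ i, Measurable (Y i))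
    (hindep : iIndepFun Y P) (r : Fin m → ℝ≥0)
    (hY : ∀ i, Measure.map (Y i) P = (poissonPMF (r i)).toMeasure) (t : Finset (Fin m)) :
    Measure.map (fun ω => ∑ i ∈ t, Y i ω) P = (poissonPMF (∑ i ∈ t, r i)).toMeasure := by
  induction t using Finset.cons_induction with
  | empty =>
      simp only [Finset.sum_empty]
      rw [poisson_zero, Measure.map_const, measure_univ, one_smul]
  | cons i t hi ih =>
      have hsum : Measurable (fun ω => ∑ j ∈ t, Y j ω) := by
        exact Finset.measurable_sum t fun j _ => hmeas j
      have hind : IndepFun (fun ω => ∑ j ∈ t, Y j ω) (Y i) P := by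
        have h := hindep.indepFun_finsetSum_of_notMem hmeas hi
        have heq : (∑ j ∈ t, Y j) = fun ω => ∑ j ∈ t, Y j ω := by
          ext ω; simp
        exact heq ▸ h
      have hpair : Measure.map (fun ω => ((∑ j ∈ t, Y j ω), Y i ω)) P
          = (Measure.map (fun ω => ∑ j ∈ t, Y j ω) P).prod (Measure.map (Y i) P) :=
        (indepFun_iff_map_prod_eq_prod_map_map hsum.aemeasurable
          (hmeas i).aemeasurable).mp hind
      have : (fun ω => ∑ j ∈ Finset.cons i t hi, Y j ω)
          = (fun p : ℕ × ℕ => p.1 + p.2) ∘ (fun ω => ((∑ j ∈ t, Y j ω), Y i ω)) := by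
        ext ω
        rw [Finset.sum_cons]; exact add_comm _ _
      rw [this, ← Measure.map_map (by fun_prop) (by fun_prop), hpair, ih, hY i,
        poisson_conv, Finset.sum_cons, add_comm]


/-- the sum of independent Poisson quantisations `Q_{s,μ}(x i)` is distributed
as the single Poisson quantisation `Q_{s,mμ}(∑ x i)`. -/
theorem sum_poisson_quantisation_eq_quantisation_sum
    (m : ℕ) (hm : 1 ≤ m) (x : Fin m → ℝ) (s μ : ℝ) (hs : 0 < s)
    (hμZ : ∃ k : ℤ, μ = s * k) (hμ : ∀ i, μ < x i)
    {Ω : Type*} [MeasureSpace Ω] (P : Measure Ω) [IsProbabilityMeasure P]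
    (Y : Fin m → Ω → ℕ) (hYmeas : ∀ i, Measurable (Y i))
    (hindep : iIndepFun Y P)
    (hYdist : ∀ i, Measure.map (Y i) P =
      (poissonPMF ⟨(x i - μ) / s, div_nonneg (by linarith [hμ i]) hs.le⟩).toMeasure)
    {Ω' : Type*} [MeasureSpace Ω'] (P' : Measure Ω') [IsProbabilityMeasure P']
    (Z : Ω' → ℕ) (hZmeas : Measurable Z)
    (hZdist : Measure.map Z P' =
      (poissonPMF ⟨(∑ i, x i - m * μ) / s, by
        have : (0:ℝ) ≤ ∑ i, x i - m * μ := by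
          have h : (m : ℝ) * μ = ∑ _i : Fin m, μ := by simp [mul_comm]
          rw [h, ← Finset.sum_sub_distrib]
          exact Finset.sum_nonneg fun i _ => le_of_lt (sub_pos.mpr (hμ i))
        exact div_nonneg this hs.le⟩).toMeasure) :
    Measure.map (fun ω => ∑ i, (s * (Y i ω : ℝ) + μ)) P =
      Measure.map (fun ω => s * (Z ω : ℝ) + m * μ) P' := by
  set r : Fin m → ℝ≥0 := fun i => ⟨(x i - μ) / s, div_nonneg (by linarith [hμ i]) hs.le⟩
    with hr
  have hmap : Measure.map (fun ω => ∑ i, Y i ω) P = (poissonPMF (∑ i, r i)).toMeasure :=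
    map_finset_sum_poisson P Y hYmeas hindep r hYdist Finset.univ
  have hrsum : ((∑ i, r i : ℝ≥0) : ℝ) = (∑ i, x i - m * μ) / s := by
    rw [NNReal.coe_sum]
    show ∑ i, (x i - μ) / s = _
    rw [← Finset.sum_div, Finset.sum_sub_distrib]
    simp [mul_comm]
  have hZ : Measure.map Z P' = (poissonPMF (∑ i, r i)).toMeasure := by
    rw [hZdist]
    congr 1
    exact congrArg poissonPMF (NNReal.coe_injective hrsum.symm)
  have hsum : Measurable (fun ω => ∑ i, Y i ω) :=
    Finset.measurable_sum Finset.univ fun j _ => hYmeas j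
  have hfmeas : Measurable (fun n : ℕ => s * (n : ℝ) + m * μ) := by fun_prop
  have hf : (fun ω => ∑ i, (s * (Y i ω : ℝ) + μ))
      = (fun n : ℕ => s * (n : ℝ) + m * μ) ∘ (fun ω => ∑ i, Y i ω) := by
    ext ω
    simp only [Function.comp_apply, Finset.sum_add_distrib, ← Finset.mul_sum]
    push_cast
    simp [mul_comm]
  rw [hf, ← Measure.map_map hfmeas hsum, hmap, ← hZ,
    Measure.map_map hfmeas hZmeas]
  rfl
end

section
/- Moments accountant dominates Rényi-type bound for mixtures (subsampled Gaussian, integer moments): let q ∈ (0,1), σ > 0, S > 0, f₁ the density of N(0,σ²) and f₂ = (1−q)·f₁ + q·g where g is the density of N(2S, σ²). Then for every integer l ≥ 1, ∫_ℝ (f₂(x)/f₁(x))^l f₁(x) dx = ∑_{j=0}^{l} C(l,j) q^j (1−q)^{l−j} exp(j(j−1)·2S²/σ²), where C(l,j) is the binomial coefficient. -/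
open Real MeasureTheory Finset

lemma gauss_integrable (σ μ : ℝ) (hσ : 0 < σ) (c : ℝ) :
    Integrable (fun x : ℝ => c * exp (-((x - μ) ^ 2) / (2 * σ ^ 2))) := by
  have hb : 0 < 1 / (2 * σ ^ 2) := by positivity
  have h := ((integrable_exp_neg_mul_sq hb).comp_sub_right μ).const_mul c
  convert h using 2 with x
  ring_nf

lemma gauss_integral_one (σ μ : ℝ) (hσ : 0 < σ) :
    ∫ x : ℝ, (1 / (σ * Real.sqrt (2 * π))) * exp (-((x - μ) ^ 2) / (2 * σ ^ 2)) = 1 := by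
  have hb : 0 < 1 / (2 * σ ^ 2) := by positivity
  rw [integral_const_mul]
  have h1 : (fun x : ℝ => exp (-((x - μ) ^ 2) / (2 * σ ^ 2)))
      = (fun x : ℝ => exp (-(1 / (2 * σ ^ 2)) * x ^ 2)) ∘ (fun x => x - μ) := by
    funext x; simp only [Function.comp]; congr 1; field_simp
  rw [h1]; rw [show ((fun x : ℝ => exp (-(1 / (2 * σ ^ 2)) * x ^ 2)) ∘ (fun x => x - μ)) = fun x => exp (-(1 / (2 * σ ^ 2)) * (x - μ) ^ 2) from rfl, integral_sub_right_eq_self (fun x : ℝ => exp (-(1 / (2 * σ ^ 2)) * x ^ 2)) μ, integral_gaussian]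
  have h2 : π / (1 / (2 * σ ^ 2)) = (2 * π) * σ ^ 2 := by field_simp
  rw [h2]
  have h3 : Real.sqrt (2 * π * σ ^ 2) = Real.sqrt 2 * Real.sqrt π * σ := by
    rw [Real.sqrt_mul (by positivity), Real.sqrt_mul (by positivity), Real.sqrt_sq hσ.le]
  rw [h3]
  have h4 : Real.sqrt 2 ≠ 0 := by positivity
  have h5 : Real.sqrt π ≠ 0 := by positivity
  rw [Real.sqrt_mul (by norm_num : (0:ℝ) ≤ 2) π]
  field_simp

lemma pointwise_key (σ S : ℝ) (hσ : 0 < σ) (j : ℕ) (x : ℝ) :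
    (exp (-((x - 2 * S) ^ 2) / (2 * σ ^ 2)) / exp (-(x ^ 2) / (2 * σ ^ 2))) ^ j
      * exp (-(x ^ 2) / (2 * σ ^ 2))
    = exp ((j : ℝ) * ((j : ℝ) - 1) * 2 * S ^ 2 / σ ^ 2)
      * exp (-((x - 2 * S * j) ^ 2) / (2 * σ ^ 2)) := by
  rw [← Real.exp_sub, ← Real.exp_nat_mul, ← Real.exp_add, ← Real.exp_add]
  congr 1
  have hσ2 : (σ : ℝ) ^ 2 ≠ 0 := by positivity
  field_simp
  ring


/-- integer moments of the privacy loss of the subsampled Gaussian mechanism: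
with `f₁` the density of `N(0,σ²)`, `g` the density of `N(2S,σ²)` and
`f₂ = (1-q) f₁ + q g`, for every integer `l ≥ 1`,
`∫ (f₂/f₁)^l f₁ = ∑_{j=0}^l C(l,j) q^j (1-q)^{l-j} exp(j(j-1)·2S²/σ²)`. -/
theorem subsampled_gaussian_moment
    (σ S q : ℝ) (hσ : 0 < σ) (hS : 0 < S) (hq : q ∈ Set.Ioo (0:ℝ) 1)
    (l : ℕ) (hl : 1 ≤ l) :
    let f₁ : ℝ → ℝ := fun x => (1 / (σ * Real.sqrt (2 * π))) * exp (-(x ^ 2) / (2 * σ ^ 2))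
    let g : ℝ → ℝ := fun x =>
      (1 / (σ * Real.sqrt (2 * π))) * exp (-((x - 2 * S) ^ 2) / (2 * σ ^ 2))
    let f₂ : ℝ → ℝ := fun x => (1 - q) * f₁ x + q * g x
    ∫ x : ℝ, (f₂ x / f₁ x) ^ l * f₁ x =
      ∑ j ∈ range (l + 1), (l.choose j : ℝ) * q ^ j * (1 - q) ^ (l - j) *
        exp ((j : ℝ) * ((j : ℝ) - 1) * 2 * S ^ 2 / σ ^ 2) := by
  intro f₁ g f₂
  have hc : (0 : ℝ) < 1 / (σ * Real.sqrt (2 * π)) := by positivity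
  have hf₁ : ∀ x, f₁ x ≠ 0 := fun x => by
    have : 0 < f₁ x := by positivity
    exact this.ne'
  -- pointwise rewriting of the integrand as a finite sum of gaussians
  have hpt : ∀ x : ℝ, (f₂ x / f₁ x) ^ l * f₁ x
      = ∑ j ∈ range (l + 1), ((l.choose j : ℝ) * q ^ j * (1 - q) ^ (l - j) *
          exp ((j : ℝ) * ((j : ℝ) - 1) * 2 * S ^ 2 / σ ^ 2)) *
          ((1 / (σ * Real.sqrt (2 * π))) * exp (-((x - 2 * S * j) ^ 2) / (2 * σ ^ 2))) := by
    intro x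
    have hratio : f₂ x / f₁ x = (1 - q) + q * (g x / f₁ x) := by
      rw [show f₂ x = (1 - q) * f₁ x + q * g x from rfl]
      rw [add_div, mul_div_assoc, div_self (hf₁ x), mul_one, mul_div_assoc]
    rw [hratio, add_comm ((1:ℝ) - q), add_pow, Finset.sum_mul]
    refine Finset.sum_congr rfl fun j hj => ?_
    have hgf : g x / f₁ x = exp (-((x - 2 * S) ^ 2) / (2 * σ ^ 2)) / exp (-(x ^ 2) / (2 * σ ^ 2)) := by
      rw [show g x = (1 / (σ * Real.sqrt (2 * π))) * exp (-((x - 2 * S) ^ 2) / (2 * σ ^ 2)) from rfl,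
        show f₁ x = (1 / (σ * Real.sqrt (2 * π))) * exp (-(x ^ 2) / (2 * σ ^ 2)) from rfl,
        mul_div_mul_left _ _ hc.ne']
    have key := pointwise_key σ S hσ j x
    rw [show f₁ x = (1 / (σ * Real.sqrt (2 * π))) * exp (-(x ^ 2) / (2 * σ ^ 2)) from rfl]
    rw [mul_pow, hgf]
    linear_combination (q ^ j * (1 - q) ^ (l - j) * (l.choose j : ℝ) *
      (1 / (σ * Real.sqrt (2 * π)))) * key
  rw [integral_congr_ae (Filter.Eventually.of_forall hpt)]
  rw [integral_finset_sum _ (fun j _ => by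
    have h := gauss_integrable σ (2 * S * j) hσ
      (((l.choose j : ℝ) * q ^ j * (1 - q) ^ (l - j) *
        exp ((j : ℝ) * ((j : ℝ) - 1) * 2 * S ^ 2 / σ ^ 2)) * (1 / (σ * Real.sqrt (2 * π))))
    convert h using 2 with x
    ring)]
  refine Finset.sum_congr rfl fun j hj => ?_
  rw [integral_const_mul, gauss_integral_one σ (2 * S * j) hσ, mul_one]
end
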